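/- For every positive integer k there exists a 1-sided 2-layer fan-bundle-planar bipartite graph with n = 3k+2 vertices and exactly (5n−7)/3 = 5k+1 edges, namely the graph obtained by chaining k copies of K_{2,3} so that consecutive copies share an edge. -/

import Mathlib

open Set

noncomputable section

/-! ### Drawings of simple graphs in the plane.

A drawing maps vertices to distinct points of `ℝ²` and each edge to a simple continuous
arc joining the images of its endpoints, such that no arc passes through the image of a
vertex other than its endpoints, any two arcs intersect in finitely many points, and no
two arcs of edges sharing an endpoint cross (they may meet only at shared endpoints). -/

structure Drawing {V : Type} (G : SimpleGraph V) where
  pos : V → ℝ × ℝ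
  pos_inj : Function.Injective pos
  arc : ∀ ⦃u v : V⦄, G.Adj u v → Path (pos u) (pos v)
  arc_symm : ∀ ⦃u v : V⦄ (h : G.Adj u v), arc h.symm = (arc h).symm
  arc_inj : ∀ ⦃u v : V⦄ (h : G.Adj u v), Function.Injective ⇑(arc h)
  arc_avoid : ∀ ⦃u v : V⦄ (h : G.Adj u v) (w : V), w ≠ u → w ≠ v →
    pos w ∉ Set.range ⇑(arc h)
  finite_inter : ∀ ⦃u v x y : V⦄ (h : G.Adj u v) (h' : G.Adj x y), s(u, v) ≠ s(x, y) →
    (Set.range ⇑(arc h) ∩ Set.range ⇑(arc h')).Finite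
  adjacent_no_cross : ∀ ⦃u v x y : V⦄ (h : G.Adj u v) (h' : G.Adj x y), s(u, v) ≠ s(x, y) →
    ¬ Disjoint ({u, v} : Set V) {x, y} →
    Set.range ⇑(arc h) ∩ Set.range ⇑(arc h') ⊆ pos '' (({u, v} : Set V) ∩ {x, y})

/-- The crossings on the arc of the edge `(u,v)`: pairs consisting of a crossing point and
the (necessarily vertex-disjoint) other edge whose arc passes through that point. -/
def Drawing.crossings {V : Type} {G : SimpleGraph V} (D : Drawing G)
    ⦃u v : V⦄ (h : G.Adj u v) : Set ((ℝ × ℝ) × Sym2 V) :=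
  {pe | ∃ (x y : V) (h' : G.Adj x y), pe.2 = s(x, y) ∧ Disjoint ({u, v} : Set V) {x, y} ∧
    pe.1 ∈ Set.range ⇑(D.arc h) ∧ pe.1 ∈ Set.range ⇑(D.arc h')}

/-- A drawing is `k`-planar if every edge arc contains at most `k` crossings. -/
def Drawing.KPlanar {V : Type} {G : SimpleGraph V} (D : Drawing G) (k : ℕ) : Prop :=
  ∀ ⦃u v : V⦄ (h : G.Adj u v), (D.crossings h).ncard ≤ k

/-! ### Fan-bundle drawings. -/

/-- The interior of an arc: its range without the two endpoints. -/
def pathInner {X : Type*} [TopologicalSpace X] {x y : X} (γ : Path x y) : Set X :=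
  Set.range ⇑γ \ {x, y}

/-- A fan-bundle drawing of a graph `G` with fan-bundles indexed by `B`.  Every edge is a
simple arc made of three consecutive parts: two end-segments, each of which either lies in
a fan-bundle anchored at the corresponding endpoint or is trivial, and a middle unbundled
part.  Each fan-bundle `b` is a simple arc from its anchor vertex to its terminal `term b`,
shared as a common initial segment by all edges bundled into it.  Each fan-bundle crosses
at most one other fan-bundle, no two fan-bundles anchored at the same vertex cross, and
the unbundled parts of edges are crossing-free. -/
structure FanBundleDrawing {V : Type} (G : SimpleGraph V) (B : Type) where
  pos : V → ℝ × ℝ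
  pos_inj : Function.Injective pos
  /-- the anchor vertex of each fan-bundle -/
  anchor : B → V
  /-- the terminal point of each fan-bundle -/
  term : B → ℝ × ℝ
  /-- the arc of each fan-bundle, from its anchor to its terminal -/
  bArc : (b : B) → Path (pos (anchor b)) (term b)
  bArc_inj : ∀ b : B, Function.Injective ⇑(bArc b)
  bArc_avoid : ∀ (b : B) (w : V), w ≠ anchor b → pos w ∉ Set.range ⇑(bArc b)
  /-- the fan-bundle (if any) containing the end-segment at `u` of the edge `(u,v)`;
  `none` means this end-segment is trivial -/
  bundleAt : ∀ ⦃u v : V⦄, G.Adj u v → Option B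
  bundleAt_anchor : ∀ ⦃u v : V⦄ (h : G.Adj u v) (b : B), bundleAt h = some b → anchor b = u
  /-- every fan-bundle contains the end-segment of at least one edge -/
  bundle_used : ∀ b : B, ∃ (u v : V) (h : G.Adj u v), bundleAt h = some b
  /-- the middle, unbundled, part of the edge `(u,v)`: it runs from the terminal of the
  fan-bundle at `u` (or from `u` itself if that end-segment is trivial) to the terminal of
  the fan-bundle at `v` (or to `v` itself) -/
  mid : ∀ ⦃u v : V⦄ (h : G.Adj u v),
    Path ((bundleAt h).elim (pos u) term) ((bundleAt h.symm).elim (pos v) term)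
  mid_symm : ∀ ⦃u v : V⦄ (h : G.Adj u v), mid h.symm = (mid h).symm
  mid_inj : ∀ ⦃u v : V⦄ (h : G.Adj u v), Function.Injective ⇑(mid h)
  mid_avoid : ∀ ⦃u v : V⦄ (h : G.Adj u v) (w : V), pos w ∉ pathInner (mid h)
  /-- each fan-bundle crosses at most one other fan-bundle -/
  bundle_cross_at_most_one : ∀ b b₁ b₂ : B,
    b₁ ≠ b → (pathInner (bArc b) ∩ pathInner (bArc b₁)).Nonempty →
    b₂ ≠ b → (pathInner (bArc b) ∩ pathInner (bArc b₂)).Nonempty → b₁ = b₂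
  /-- no two fan-bundles anchored at the same vertex cross -/
  same_anchor_no_cross : ∀ b b' : B, b ≠ b' → anchor b = anchor b' →
    pathInner (bArc b) ∩ pathInner (bArc b') = ∅
  /-- the unbundled parts of edges are crossing-free: they cross neither each other ... -/
  mid_no_cross_mid : ∀ ⦃u v x y : V⦄ (h : G.Adj u v) (h' : G.Adj x y), s(u, v) ≠ s(x, y) →
    pathInner (mid h) ∩ pathInner (mid h') = ∅
  /-- ... nor any fan-bundle -/
  mid_no_cross_bundle : ∀ ⦃u v : V⦄ (h : G.Adj u v) (b : B),
    pathInner (mid h) ∩ pathInner (bArc b) = ∅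

namespace FanBundleDrawing

variable {V : Type} {G : SimpleGraph V} {B : Type}

/-- In a 1-sided fan-bundle drawing, each edge has an end-segment lying in a fan-bundle
anchored at exactly one of its two endpoints; the other end-segment is trivial. -/
def OneSided (D : FanBundleDrawing G B) : Prop :=
  ∀ ⦃u v : V⦄ (h : G.Adj u v), Xor' (D.bundleAt h = none) (D.bundleAt h.symm = none)

/-- In a 2-sided fan-bundle drawing, each end-segment of every edge lies in a fan-bundle
anchored at the corresponding endpoint. -/
def TwoSided (D : FanBundleDrawing G B) : Prop :=
  ∀ ⦃u v : V⦄ (h : G.Adj u v), D.bundleAt h ≠ none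

/-- The set of points of the plane covered by the drawing. -/
def image (D : FanBundleDrawing G B) : Set (ℝ × ℝ) :=
  Set.range D.pos ∪ (⋃ b : B, Set.range ⇑(D.bArc b)) ∪
    ⋃ (u : V) (v : V) (h : G.Adj u v), Set.range ⇑(D.mid h)

/-- A fan-bundle drawing is outer if all vertices are incident to the unbounded face,
i.e. every vertex lies in the closure of the unbounded part of the complement of the
drawing. -/
def Outer (D : FanBundleDrawing G B) : Prop :=
  ∀ v : V, D.pos v ∈
    closure {p : ℝ × ℝ | p ∉ D.image ∧ ¬ Bornology.IsBounded (connectedComponentIn D.imageᶜ p)}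

/-- A fan-bundle drawing is 2-layer if the vertices lie on two distinct parallel
(horizontal, after a suitable rigid motion) lines, adjacent vertices lie on different
lines, and the whole drawing lies in the strip between the two lines. -/
def TwoLayer (D : FanBundleDrawing G B) : Prop :=
  ∃ a b : ℝ, a < b ∧ (∀ v : V, (D.pos v).2 = a ∨ (D.pos v).2 = b) ∧
    (∀ ⦃u v : V⦄, G.Adj u v → (D.pos u).2 ≠ (D.pos v).2) ∧
    D.image ⊆ {p : ℝ × ℝ | a ≤ p.2 ∧ p.2 ≤ b}

/-- The size of a fan-bundle: the number of edges bundled into it. -/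
def size (D : FanBundleDrawing G B) (b : B) : ℕ :=
  {v : V | ∃ h : G.Adj (D.anchor b) v, D.bundleAt h = some b}.ncard

end FanBundleDrawing

def OneSidedFanBundlePlanar {V : Type} (G : SimpleGraph V) : Prop :=
  ∃ (B : Type) (D : FanBundleDrawing G B), D.OneSided

def TwoSidedFanBundlePlanar {V : Type} (G : SimpleGraph V) : Prop :=
  ∃ (B : Type) (D : FanBundleDrawing G B), D.TwoSided

def OneSidedOuterFanBundlePlanar {V : Type} (G : SimpleGraph V) : Prop :=
  ∃ (B : Type) (D : FanBundleDrawing G B), D.OneSided ∧ D.Outer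

def TwoSidedOuterFanBundlePlanar {V : Type} (G : SimpleGraph V) : Prop :=
  ∃ (B : Type) (D : FanBundleDrawing G B), D.TwoSided ∧ D.Outer

def OneSidedTwoLayerFanBundlePlanar {V : Type} (G : SimpleGraph V) : Prop :=
  ∃ (B : Type) (D : FanBundleDrawing G B), D.OneSided ∧ D.TwoLayer

def TwoSidedTwoLayerFanBundlePlanar {V : Type} (G : SimpleGraph V) : Prop :=
  ∃ (B : Type) (D : FanBundleDrawing G B), D.TwoSided ∧ D.TwoLayer

/-- The graph obtained by chaining `k` copies of `K_{2,3}` so that consecutive copies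
share an edge: the `t`-th copy (for `0 ≤ t < k`) is the complete bipartite graph between
the vertices `a_t, a_{t+1}` of the first layer and `b_{2t}, b_{2t+1}, b_{2t+2}` of the
second layer, so that the `t`-th and `(t+1)`-st copies share the edge
`(a_{t+1}, b_{2t+2})`. -/
def chainK23 (k : ℕ) : SimpleGraph (Fin (k + 1) ⊕ Fin (2 * k + 1)) :=
  SimpleGraph.fromRel (fun x y =>
    match x, y with
    | Sum.inl i, Sum.inr j => ∃ t : ℕ, t < k ∧ (i.val = t ∨ i.val = t + 1) ∧
        (j.val = 2 * t ∨ j.val = 2 * t + 1 ∨ j.val = 2 * t + 2)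
    | _, _ => False)

/-! Place `a_i` at `(10i, 2)` and `b_j` at `(5j, 0)`, and draw everything with straight
segments. Besides a vertical fan-bundle down to `(10i, 1)` for the edge `a_i b_{2i}`, the vertex
`a_i` gets a left and a right fan-bundle ending at `(10i ∓ 6, 1)`, carrying its edges to
`b_{2i-2}, b_{2i-1}` and to `b_{2i+1}, b_{2i+2}`; the unbundled parts run straight from the
terminals down to the `b_j`. Two segments joining the same two horizontal lines cross only if
their endpoints come in opposite orders on the two lines. Hence the right fan-bundle of `a_t`
crosses the left one of `a_{t+1}` and nothing else, and the unbundled parts, whose endpoints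
are ordered consistently along the chain, do not cross at all. Numbering the edge `a_i b_j` by
`3i + j = 5i + (j - 2i)` with `j - 2i ∈ [-2, 2]` enumerates the edges as `0, …, 5k`. -/

lemma pathInner_segment_subset {E : Type*} [AddCommGroup E] [Module ℝ E] [TopologicalSpace E]
    [ContinuousAdd E] [ContinuousSMul ℝ E] (p q : E) :
    pathInner (Path.segment p q) ⊆ openSegment ℝ p q := by
  rintro z ⟨hz, hpq⟩
  simp only [mem_insert_iff, mem_singleton_iff, not_or] at hpq
  rw [Path.range_segment] at hz
  exact mem_openSegment_of_ne_left_right (Ne.symm hpq.1) (Ne.symm hpq.2) hz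

section Plane

variable {p q p' q' z : ℝ × ℝ}

lemma snd_mem_Ioo_of_mem_openSegment (hz : z ∈ openSegment ℝ p q) (h : q.2 < p.2) :
    z.2 ∈ Ioo q.2 p.2 := by
  have hz2 := (Prod.openSegment_subset p q hz).2
  rwa [openSegment_symm, openSegment_eq_Ioo h] at hz2

lemma segment_subset_snd_preimage_Icc {a b : ℝ} (hp : p.2 ∈ Icc a b) (hq : q.2 ∈ Icc a b) :
    segment ℝ p q ⊆ Prod.snd ⁻¹' Icc a b :=
  ((convex_Icc a b).linear_preimage (LinearMap.snd ℝ ℝ ℝ)).segment_subset hp hq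

/-- A common point lies at the same height on both segments, hence at the same convex
parameter, so its first coordinate is the same convex combination of `p.1, q.1` and of
`p'.1, q'.1`. -/
lemma fst_cmp_of_mem_openSegment_inter (hz : z ∈ openSegment ℝ p q)
    (hz' : z ∈ openSegment ℝ p' q') (hp : p.2 = p'.2) (hq : q.2 = q'.2) (hpq : p.2 ≠ q.2) :
    p.1 = p'.1 ∧ q.1 = q'.1 ∨ p.1 < p'.1 ∧ q'.1 < q.1 ∨ p'.1 < p.1 ∧ q.1 < q'.1 := by
  obtain ⟨a, b, ha, hb, hab, rfl⟩ := hz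
  obtain ⟨a', b', ha', hb', hab', h⟩ := hz'
  obtain ⟨h₁, h₂⟩ := Prod.ext_iff.1 h
  simp only [Prod.fst_add, Prod.snd_add, Prod.smul_fst, Prod.smul_snd, smul_eq_mul] at h₁ h₂
  have hb' : b' = b := by
    have : (b' - b) * (q.2 - p.2) = 0 := by
      rw [← hp, ← hq] at h₂
      linear_combination h₂ + p.2 * (hab - hab')
    exact sub_eq_zero.1 ((mul_eq_zero.1 this).resolve_right (sub_ne_zero.2 hpq.symm))
  obtain rfl : a' = a := by linarith
  subst hb'
  rcases lt_trichotomy p.1 p'.1 with h | h | h <;>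
    rcases lt_trichotomy q.1 q'.1 with h' | h' | h'
  all_goals first
    | exact Or.inl ⟨by assumption, by assumption⟩
    | exact Or.inr (Or.inl ⟨by assumption, by assumption⟩)
    | exact Or.inr (Or.inr ⟨by assumption, by assumption⟩)
    | nlinarith

end Plane

namespace chainK23

variable {k : ℕ} {i i' : Fin (k + 1)} {j j' : Fin (2 * k + 1)}
  {u v : Fin (k + 1) ⊕ Fin (2 * k + 1)} {z : ℝ × ℝ}

lemma adj_inl_inr_iff :
    (chainK23 k).Adj (.inl i) (.inr j) ↔ ∃ t < k, ((i : ℕ) = t ∨ (i : ℕ) = t + 1) ∧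
      ((j : ℕ) = 2 * t ∨ (j : ℕ) = 2 * t + 1 ∨ (j : ℕ) = 2 * t + 2) := by
  simp [chainK23]

lemma adj_cases (h : (chainK23 k).Adj u v) :
    ∃ i j, (chainK23 k).Adj (.inl i) (.inr j) ∧
      (u = .inl i ∧ v = .inr j ∨ u = .inr j ∧ v = .inl i) := by
  rcases u with i | j <;> rcases v with i' | j'
  · simp [chainK23] at h
  · exact ⟨i, j', h, Or.inl ⟨rfl, rfl⟩⟩
  · exact ⟨i', j, h.symm, Or.inr ⟨rfl, rfl⟩⟩
  · simp [chainK23] at h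

lemma le_and_le_of_adj (h : (chainK23 k).Adj (.inl i) (.inr j)) :
    2 * (i : ℕ) ≤ j + 2 ∧ (j : ℕ) ≤ 2 * i + 2 := by
  obtain ⟨t, -, hi, hj⟩ := adj_inl_inr_iff.1 h
  omega

lemma adj_inl_inr_iff_le (hk : 1 ≤ k) :
    (chainK23 k).Adj (.inl i) (.inr j) ↔ 2 * (i : ℕ) ≤ j + 2 ∧ (j : ℕ) ≤ 2 * i + 2 := by
  refine ⟨le_and_le_of_adj, fun h => adj_inl_inr_iff.2 ?_⟩
  have := i.isLt
  have := j.isLt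
  rcases Nat.lt_or_ge (j : ℕ) (2 * i) with hj | hj
  · exact ⟨i - 1, by omega, by omega, by omega⟩
  · rcases Nat.lt_or_ge (i : ℕ) k with hi | hi
    · exact ⟨i, hi, by omega, by omega⟩
    · exact ⟨i - 1, by omega, by omega, by omega⟩

theorem edgeSet_ncard (hk : 1 ≤ k) : (chainK23 k).edgeSet.ncard = 5 * k + 1 := by
  refine Set.ncard_eq_of_bijective
    (fun r hr => s(.inl ⟨(r + 2) / 5, by omega⟩, .inr ⟨r - 3 * ((r + 2) / 5), by omega⟩))
    ?_ ?_ ?_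
  · intro e he
    induction e using Sym2.ind with
    | _ u v =>
      obtain ⟨i, j, hij, huv⟩ := adj_cases he
      have := le_and_le_of_adj hij
      have := i.isLt
      have := j.isLt
      refine ⟨3 * i + j, by omega, ?_⟩
      rcases huv with ⟨rfl, rfl⟩ | ⟨rfl, rfl⟩ <;>
        simp only [Sym2.eq_iff, Sum.inl.injEq, Sum.inr.injEq, reduceCtorEq, Fin.ext_iff] <;> omega
  · intro r hr
    exact (adj_inl_inr_iff_le hk).2 (by simp only; omega)
  · intro r r' hr hr' h
    simp only [Sym2.eq_iff, Sum.inl.injEq, Sum.inr.injEq, reduceCtorEq, false_and, or_false,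
      Fin.ext_iff] at h
    omega

/-- Whether the edge `a_i b_j` leaves `a_i` to the left (`-1`), vertically (`0`) or to the
right (`1`); it picks the fan-bundle at `a_i` carrying that edge. -/
def bundleDir (i j : ℕ) : ℤ := if j < 2 * i then -1 else if j = 2 * i then 0 else 1

lemma bundleDir_mem (i j : ℕ) :
    bundleDir i j = -1 ∨ bundleDir i j = 0 ∨ bundleDir i j = 1 := by
  unfold bundleDir
  split_ifs <;> simp

/-- Fan-bundles are (anchor, direction) pairs; only those carrying some edge are kept, since
every fan-bundle of a drawing must be used. -/
abbrev Bundle (k : ℕ) : Type :=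
  {b : Fin (k + 1) × ℤ // ∃ j, (chainK23 k).Adj (.inl b.1) (.inr j) ∧ bundleDir b.1 j = b.2}

def bundleOf (h : (chainK23 k).Adj (.inl i) (.inr j)) : Bundle k :=
  ⟨(i, bundleDir i j), j, h, rfl⟩

def pos : Fin (k + 1) ⊕ Fin (2 * k + 1) → ℝ × ℝ
  | .inl i => ((10 * i : ℕ), 2)
  | .inr j => ((5 * j : ℕ), 0)

def term (b : Bundle k) : ℝ × ℝ := ((10 * (b.1.1 : ℕ) + 6 * b.1.2 : ℤ), 1)

def bundleAt :
    ∀ ⦃u v : Fin (k + 1) ⊕ Fin (2 * k + 1)⦄, (chainK23 k).Adj u v → Option (Bundle k)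
  | .inl _, .inr _, h => some (bundleOf h)
  | _, _, _ => none

def midEnd ⦃u v : Fin (k + 1) ⊕ Fin (2 * k + 1)⦄ (h : (chainK23 k).Adj u v) : ℝ × ℝ :=
  (bundleAt h).elim (pos u) term

lemma pos_injective : Function.Injective (pos (k := k)) := by
  rintro (i | j) (i' | j') h <;>
    simp only [pos, Prod.mk.injEq, Nat.cast_inj, OfNat.ofNat_ne_zero, OfNat.zero_ne_ofNat,
      and_false, and_true, Sum.inl.injEq, Sum.inr.injEq, Fin.ext_iff] at h ⊢ <;> omega

lemma pos_snd_eq (v : Fin (k + 1) ⊕ Fin (2 * k + 1)) : (pos v).2 = 0 ∨ (pos v).2 = 2 := by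
  rcases v with i | j <;> simp [pos]

lemma midEnd_snd_mem (h : (chainK23 k).Adj u v) : (midEnd h).2 ∈ Icc (0 : ℝ) 2 := by
  unfold midEnd
  cases bundleAt h with
  | none => rcases pos_snd_eq u with h | h <;> simp [h]
  | some b => simp [term]

lemma midEnd_cases (h : (chainK23 k).Adj u v) :
    ∃ i j, ∃ hij : (chainK23 k).Adj (.inl i) (.inr j), s(u, v) = s(.inl i, .inr j) ∧
      (midEnd h = term (bundleOf hij) ∧ midEnd h.symm = pos (.inr j) ∨
        midEnd h = pos (.inr j) ∧ midEnd h.symm = term (bundleOf hij)) := by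
  obtain ⟨i, j, hij, ⟨rfl, rfl⟩ | ⟨rfl, rfl⟩⟩ := adj_cases h
  · exact ⟨i, j, hij, rfl, Or.inl ⟨rfl, rfl⟩⟩
  · exact ⟨i, j, hij, Sym2.eq_swap, Or.inr ⟨rfl, rfl⟩⟩

lemma midEnd_ne (h : (chainK23 k).Adj u v) : midEnd h ≠ midEnd h.symm := by
  obtain ⟨i, j, hij, -, ⟨h₁, h₂⟩ | ⟨h₁, h₂⟩⟩ := midEnd_cases h <;>
    rw [h₁, h₂] <;> intro he <;> simpa [term, pos] using congrArg Prod.snd he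

lemma pathInner_mid_subset (h : (chainK23 k).Adj u v) :
    ∃ i j, ∃ hij : (chainK23 k).Adj (.inl i) (.inr j), s(u, v) = s(.inl i, .inr j) ∧
      pathInner (Path.segment (midEnd h) (midEnd h.symm)) ⊆
        openSegment ℝ (term (bundleOf hij)) (pos (.inr j)) := by
  obtain ⟨i, j, hij, huv, ⟨h₁, h₂⟩ | ⟨h₁, h₂⟩⟩ := midEnd_cases h <;>
    refine ⟨i, j, hij, huv, ?_⟩
  · rw [h₁, h₂]
    exact pathInner_segment_subset _ _
  · rw [h₁, h₂, openSegment_symm]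
    exact pathInner_segment_subset _ _

lemma snd_mem_Ioo_of_mem_pathInner_mid (h : (chainK23 k).Adj u v)
    (hz : z ∈ pathInner (Path.segment (midEnd h) (midEnd h.symm))) : z.2 ∈ Ioo (0 : ℝ) 1 := by
  obtain ⟨i, j, hij, -, hsub⟩ := pathInner_mid_subset h
  simpa [term, pos] using snd_mem_Ioo_of_mem_openSegment (hsub hz) (by simp [term, pos])

lemma snd_mem_Ioo_of_mem_bundle (b : Bundle k)
    (hz : z ∈ openSegment ℝ (pos (.inl b.1.1)) (term b)) : z.2 ∈ Ioo (1 : ℝ) 2 := by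
  simpa [term, pos] using snd_mem_Ioo_of_mem_openSegment hz (by norm_num [term, pos])

lemma eq_of_mem_mid_inter {hij : (chainK23 k).Adj (.inl i) (.inr j)}
    {hij' : (chainK23 k).Adj (.inl i') (.inr j')}
    (hz : z ∈ openSegment ℝ (term (bundleOf hij)) (pos (.inr j)))
    (hz' : z ∈ openSegment ℝ (term (bundleOf hij')) (pos (.inr j'))) : i = i' ∧ j = j' := by
  have hcmp := fst_cmp_of_mem_openSegment_inter hz hz' rfl rfl (by norm_num [term, pos])
  simp only [term, pos, bundleOf, Int.cast_inj, Int.cast_lt, Nat.cast_inj, Nat.cast_lt] at hcmp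
  have := le_and_le_of_adj hij
  have := le_and_le_of_adj hij'
  unfold bundleDir at hcmp
  simp only [Fin.ext_iff]
  split_ifs at hcmp <;> omega

lemma partner_of_mem_bundle_inter {b b' : Bundle k} (hne : b ≠ b')
    (hz : z ∈ openSegment ℝ (pos (.inl b.1.1)) (term b))
    (hz' : z ∈ openSegment ℝ (pos (.inl b'.1.1)) (term b')) :
    (b'.1.1 : ℤ) = b.1.1 + b.1.2 ∧ b'.1.2 = -b.1.2 ∧ b.1.2 ≠ 0 := by
  have hcmp := fst_cmp_of_mem_openSegment_inter hz hz' rfl rfl (by norm_num [term, pos])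
  simp only [term, pos, Int.cast_inj, Int.cast_lt, Nat.cast_inj, Nat.cast_lt] at hcmp
  have hdir : ∀ b : Bundle k, b.1.2 = -1 ∨ b.1.2 = 0 ∨ b.1.2 = 1 := fun b => by
    obtain ⟨j, -, hj⟩ := b.2
    exact hj ▸ bundleDir_mem _ _
  have hne' : ¬((b.1.1 : ℕ) = b'.1.1 ∧ b.1.2 = b'.1.2) := fun ⟨h₁, h₂⟩ =>
    hne (Subtype.ext (Prod.ext (Fin.ext h₁) h₂))
  have := hdir b
  have := hdir b'
  omega

def drawing (k : ℕ) : FanBundleDrawing (chainK23 k) (Bundle k) where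
  pos := pos
  pos_inj := pos_injective
  anchor b := .inl b.1.1
  term := term
  bArc b := Path.segment _ _
  bArc_inj b :=
    Path.segment_injective_of_ne fun h => by simpa [pos, term] using congrArg Prod.snd h
  bArc_avoid b w hw hz := by
    rw [Path.range_segment, ← insert_endpoints_openSegment] at hz
    rcases hz with hz | hz | hz
    · exact hw (pos_injective hz)
    · rcases pos_snd_eq w with h | h <;> simp [hz, term] at h
    · have := snd_mem_Ioo_of_mem_bundle b hz
      rcases pos_snd_eq w with h | h <;> rw [h] at this <;> norm_num at this
  bundleAt := bundleAt
  bundleAt_anchor := by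
    rintro (i | j) (i' | j') h b hb <;> cases hb
    rfl
  bundle_used := by
    rintro ⟨b, j, hij, hb⟩
    exact ⟨_, _, hij, congrArg some (Subtype.ext (Prod.ext rfl hb))⟩
  mid _ _ h := Path.segment (midEnd h) (midEnd h.symm)
  mid_symm _ _ _ := (Path.segment_symm _ _).symm
  mid_inj _ _ h := Path.segment_injective_of_ne (midEnd_ne h)
  mid_avoid _ _ h w hw := by
    have := snd_mem_Ioo_of_mem_pathInner_mid h hw
    rcases pos_snd_eq w with h | h <;> rw [h] at this <;> norm_num at this
  bundle_cross_at_most_one b b₁ b₂ h₁ hb₁ h₂ hb₂ := by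
    obtain ⟨z₁, hz₁, hz₁'⟩ := hb₁
    obtain ⟨z₂, hz₂, hz₂'⟩ := hb₂
    have e₁ := partner_of_mem_bundle_inter h₁.symm (pathInner_segment_subset _ _ hz₁)
      (pathInner_segment_subset _ _ hz₁')
    have e₂ := partner_of_mem_bundle_inter h₂.symm (pathInner_segment_subset _ _ hz₂)
      (pathInner_segment_subset _ _ hz₂')
    exact Subtype.ext (Prod.ext (Fin.ext (by omega)) (by omega))
  same_anchor_no_cross b b' hne hanchor := by
    refine Set.not_nonempty_iff_eq_empty.1 fun ⟨z, hz, hz'⟩ => ?_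
    have e := partner_of_mem_bundle_inter hne (pathInner_segment_subset _ _ hz)
      (pathInner_segment_subset _ _ hz')
    have := congrArg Fin.val (Sum.inl.inj hanchor)
    omega
  mid_no_cross_mid _ _ _ _ h h' hne := by
    refine Set.eq_empty_iff_forall_notMem.2 fun z ⟨hz, hz'⟩ => ?_
    obtain ⟨i, j, hij, huv, hsub⟩ := pathInner_mid_subset h
    obtain ⟨i', j', hij', hxy, hsub'⟩ := pathInner_mid_subset h'
    obtain ⟨rfl, rfl⟩ := eq_of_mem_mid_inter (hsub hz) (hsub' hz')
    exact hne (huv.trans hxy.symm)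
  mid_no_cross_bundle _ _ h b := by
    refine Set.eq_empty_iff_forall_notMem.2 fun z ⟨hz, hz'⟩ => ?_
    have h₁ := snd_mem_Ioo_of_mem_pathInner_mid h hz
    have h₂ := snd_mem_Ioo_of_mem_bundle b (pathInner_segment_subset _ _ hz')
    linarith [h₁.2, h₂.1]

lemma drawing_oneSided : (drawing k).OneSided := by
  intro u v h
  obtain ⟨i, j, -, ⟨rfl, rfl⟩ | ⟨rfl, rfl⟩⟩ := adj_cases h
  · exact xor_def.2 (.inr ⟨rfl, Option.some_ne_none _⟩)
  · exact xor_def.2 (.inl ⟨rfl, Option.some_ne_none _⟩)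

lemma drawing_twoLayer : (drawing k).TwoLayer := by
  refine ⟨0, 2, two_pos, pos_snd_eq, fun u v h => ?_, ?_⟩
  · obtain ⟨i, j, -, ⟨rfl, rfl⟩ | ⟨rfl, rfl⟩⟩ := adj_cases h <;>
      norm_num [drawing, pos]
  · have hpos : ∀ v, (pos (k := k) v).2 ∈ Icc (0 : ℝ) 2 := fun v => by
      rcases pos_snd_eq v with h | h <;> simp [h]
    rintro z ((⟨v, rfl⟩ | hz) | hz)
    · exact hpos v
    · obtain ⟨b, hz⟩ := mem_iUnion.1 hz
      change z ∈ Set.range (Path.segment (pos (.inl b.1.1)) (term b)) at hz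
      rw [Path.range_segment] at hz
      exact segment_subset_snd_preimage_Icc (hpos _) (by norm_num [term]) hz
    · simp only [mem_iUnion] at hz
      obtain ⟨u, v, h, hz⟩ := hz
      change z ∈ Set.range (Path.segment (midEnd h) (midEnd h.symm)) at hz
      rw [Path.range_segment] at hz
      exact segment_subset_snd_preimage_Icc (midEnd_snd_mem h) (midEnd_snd_mem h.symm) hz

theorem oneSidedTwoLayerFanBundlePlanar : OneSidedTwoLayerFanBundlePlanar (chainK23 k) :=
  ⟨Bundle k, drawing k, drawing_oneSided, drawing_twoLayer⟩

end chainK23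

/-- For every positive integer `k`, the graph obtained by chaining `k`
copies of `K_{2,3}` so that consecutive copies share an edge is a 1-sided 2-layer
fan-bundle-planar bipartite graph with `n = 3k+2` vertices and exactly
`(5n−7)/3 = 5k+1` edges. -/
theorem chainK23_two_layer (k : ℕ) (hk : 1 ≤ k) :
    Fintype.card (Fin (k + 1) ⊕ Fin (2 * k + 1)) = 3 * k + 2 ∧
    OneSidedTwoLayerFanBundlePlanar (chainK23 k) ∧
    (chainK23 k).edgeSet.ncard = 5 * k + 1 := by
  refine ⟨?_, chainK23.oneSidedTwoLayerFanBundlePlanar, chainK23.edgeSet_ncard hk⟩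
  simp only [Fintype.card_sum, Fintype.card_fin]
  omega
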